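/- arXiv:1102.5390 — 6 statements merged into one kernel-verified Lean document; each statement's English description precedes it below -/
import Mathlib

section
/- Let A be a J × n real matrix of full row rank J and let D be a kernel basis matrix of A. The relational model for intensities defined by D (log λ) = 0 is scale invariant — that is, for every t > 0 and every λ ∈ ℝ^n with strictly positive entries, D (log λ) = 0 implies D (log (t·λ)) = 0 — if and only if the all-ones vector 1 ∈ ℝ^n lies in the row space of A. -/
/-!
Since `log (t·λ) = log t • 1 + log λ`, the model `D (log λ) = 0` is scale invariant exactly when
`D 1 = 0`, i.e. when `1` is orthogonal to the rows of `D`, hence to `Ker A`, which they span.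
The orthogonal complement of `Ker A` is the row space of `A`: under the identification of
`ℝⁿ` with its dual by the dot product, it is the annihilator of `Ker A`, which is the range
of the dual map of `A`.
-/

open Matrix

section DotProduct

variable {R m n : Type*} [Fintype n]

theorem Matrix.mulVec_eq_zero_iff_forall_mem_span_dotProduct [CommSemiring R]
    (D : Matrix m n R) (v : n → R) :
    D *ᵥ v = 0 ↔ ∀ x ∈ Submodule.span R (Set.range fun i => D i), x ⬝ᵥ v = 0 := by
  classical
  have hspan := Submodule.span_le (s := Set.range fun i => D i)
    (p := LinearMap.ker (dotProductEquiv R n v))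
  simp only [Set.range_subset_iff, SetLike.mem_coe, LinearMap.mem_ker,
    dotProductEquiv_apply_apply, SetLike.le_def] at hspan
  simp only [funext_iff, mulVec, Pi.zero_apply, dotProduct_comm _ v]
  exact hspan.symm

variable [Fintype m]

theorem Matrix.dualMap_mulVecLin_comp_dotProductEquiv [CommSemiring R] [DecidableEq m]
    [DecidableEq n] (A : Matrix m n R) :
    A.mulVecLin.dualMap ∘ₗ (dotProductEquiv R m).toLinearMap =
      (dotProductEquiv R n).toLinearMap ∘ₗ Aᵀ.mulVecLin := by
  ext k x
  simp

theorem Matrix.mem_range_mulVecLin_transpose_iff [Field R] (A : Matrix m n R) (v : n → R) :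
    v ∈ LinearMap.range Aᵀ.mulVecLin ↔ ∀ x ∈ LinearMap.ker A.mulVecLin, x ⬝ᵥ v = 0 := by
  classical
  have h := congrArg LinearMap.range A.dualMap_mulVecLin_comp_dotProductEquiv
  rw [LinearMap.range_comp_of_range_eq_top _ (LinearEquiv.range _),
    LinearMap.range_dualMap_eq_dualAnnihilator_ker, LinearMap.range_comp] at h
  have hv := Submodule.mem_map_equiv (p := LinearMap.range Aᵀ.mulVecLin)
    (e := dotProductEquiv R n) (x := dotProductEquiv R n v)
  rw [LinearEquiv.symm_apply_apply, ← h, Submodule.mem_dualAnnihilator] at hv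
  simp only [dotProductEquiv_apply_apply, dotProduct_comm v] at hv
  exact hv.symm

end DotProduct

section ScaleInvariance

variable {m n : Type*} [Fintype n]

theorem Matrix.mulVec_log_const_mul (D : Matrix m n ℝ) {t : ℝ} (ht : t ≠ 0) {lam : n → ℝ}
    (hlam : ∀ i, lam i ≠ 0) :
    D *ᵥ (fun i => Real.log (t * lam i)) =
      Real.log t • D *ᵥ (fun _ => 1) + D *ᵥ (fun i => Real.log (lam i)) := by
  have hlog : (fun i => Real.log (t * lam i)) =
      Real.log t • (fun _ => (1 : ℝ)) + fun i => Real.log (lam i) := by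
    funext i
    simp [Real.log_mul ht (hlam i)]
  rw [hlog, mulVec_add, mulVec_smul]

theorem Matrix.log_scale_invariant_iff_mulVec_one (D : Matrix m n ℝ) :
    (∀ t : ℝ, 0 < t → ∀ lam : n → ℝ, (∀ i, 0 < lam i) →
        D *ᵥ (fun i => Real.log (lam i)) = 0 → D *ᵥ (fun i => Real.log (t * lam i)) = 0) ↔
      D *ᵥ (fun _ => 1) = 0 := by
  constructor
  · intro h
    have h0 : (D *ᵥ fun _ => Real.log 1) = 0 := by
      simp only [Real.log_one]
      exact D.mulVec_zero
    have h1 := h (Real.exp 1) (Real.exp_pos 1) (fun _ => 1) (fun _ => one_pos) h0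
    rwa [D.mulVec_log_const_mul (Real.exp_pos 1).ne' (fun _ => one_ne_zero), h0, Real.log_exp,
      one_smul, add_zero] at h1
  · intro h1 t ht lam hlam hD
    rw [D.mulVec_log_const_mul ht.ne' (fun i => (hlam i).ne'), h1, hD, smul_zero, add_zero]

end ScaleInvariance

theorem stmt4_general
    (J n : ℕ)
    (A : Matrix (Fin J) (Fin n) ℝ)
    (D : Matrix (Fin (n - J)) (Fin n) ℝ)
    (hDspan : Submodule.span ℝ (Set.range (fun l => D l)) = LinearMap.ker A.mulVecLin) :
    (∀ t : ℝ, 0 < t → ∀ lam : Fin n → ℝ, (∀ i, 0 < lam i) →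
        D.mulVec (fun i => Real.log (lam i)) = 0 →
        D.mulVec (fun i => Real.log (t * lam i)) = 0) ↔
      ∃ k : Fin J → ℝ, (fun _ => (1 : ℝ)) = A.transpose.mulVec k := by
  rw [D.log_scale_invariant_iff_mulVec_one, D.mulVec_eq_zero_iff_forall_mem_span_dotProduct,
    hDspan, ← A.mem_range_mulVecLin_transpose_iff]
  simp only [LinearMap.mem_range, mulVecLin_apply, eq_comm]

/-- Let `A` be a `J × n` real matrix of full row rank `J` and `D` a kernel
basis matrix of `A`.  The relational model for intensities `D (log λ) = 0` is scale
invariant — for every `t > 0` and strictly positive `λ`, `D (log λ) = 0` implies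
`D (log (t·λ)) = 0` — if and only if the all-ones vector lies in the row space of `A`. -/
theorem stmt4
    (J n : ℕ) (hJn : J < n)
    (A : Matrix (Fin J) (Fin n) ℝ)
    (hrank : A.rank = J)
    (D : Matrix (Fin (n - J)) (Fin n) ℝ)
    (hDindep : LinearIndependent ℝ (fun l => D l))
    (hDspan : Submodule.span ℝ (Set.range (fun l => D l)) = LinearMap.ker A.mulVecLin) :
    (∀ t : ℝ, 0 < t → ∀ lam : Fin n → ℝ, (∀ i, 0 < lam i) →
        D.mulVec (fun i => Real.log (lam i)) = 0 →
        D.mulVec (fun i => Real.log (t * lam i)) = 0) ↔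
      ∃ k : Fin J → ℝ, (fun _ => (1 : ℝ)) = A.transpose.mulVec k :=
  stmt4_general J n A D hDspan
end

section
/- Let A be a J × n real matrix. If x, y ∈ ℝ^n have strictly positive entries, log x = Aᵀβ₁ and log y = Aᵀβ₂ for some β₁, β₂ ∈ ℝ^J, and A x = A y, then x = y. -/
/-!
`x - y` lies in the kernel of `A` while `log x - log y` lies in the row space of `A`, so the two
are orthogonal. Since `log` is strictly increasing, every term of
`∑ i, (x i - y i) * (log (x i) - log (y i))` is nonnegative and vanishes only when `x i = y i`.
-/

open Matrix

theorem Matrix.dotProduct_transpose_mulVec_eq_zero {m n R : Type*} [Fintype m] [Fintype n]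
    [CommSemiring R] (A : Matrix m n R) (β : m → R) {v : n → R} (hv : A *ᵥ v = 0) :
    v ⬝ᵥ (Aᵀ *ᵥ β) = 0 := by
  rw [mulVec_transpose, dotProduct_comm, ← dotProduct_mulVec, hv, dotProduct_zero]

section StrictMonoOn

variable {α : Type*} [Ring α] [LinearOrder α] [IsStrictOrderedRing α] {f : α → α} {s : Set α}

theorem StrictMonoOn.sub_mul_sub_pos (hf : StrictMonoOn f s) {a b : α} (ha : a ∈ s) (hb : b ∈ s)
    (hab : a ≠ b) : 0 < (a - b) * (f a - f b) := by
  rcases hab.lt_or_gt with hlt | hgt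
  · exact mul_pos_of_neg_of_neg (sub_neg.2 hlt) (sub_neg.2 (hf ha hb hlt))
  · exact mul_pos (sub_pos.2 hgt) (sub_pos.2 (hf hb ha hgt))

theorem StrictMonoOn.sub_mul_sub_nonneg (hf : StrictMonoOn f s) {a b : α} (ha : a ∈ s)
    (hb : b ∈ s) : 0 ≤ (a - b) * (f a - f b) := by
  rcases eq_or_ne a b with rfl | hab
  · simp
  · exact (hf.sub_mul_sub_pos ha hb hab).le

theorem StrictMonoOn.eq_of_dotProduct_sub_comp_sub_eq_zero {ι : Type*} [Fintype ι]
    (hf : StrictMonoOn f s) {x y : ι → α} (hx : ∀ i, x i ∈ s) (hy : ∀ i, y i ∈ s)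
    (h : (x - y) ⬝ᵥ (f ∘ x - f ∘ y) = 0) : x = y := by
  have hterms := (Finset.sum_eq_zero_iff_of_nonneg fun i _ ↦
    hf.sub_mul_sub_nonneg (hx i) (hy i)).1 h
  funext i
  by_contra hne
  exact (hf.sub_mul_sub_pos (hx i) (hy i) hne).ne' (hterms i (Finset.mem_univ i))

end StrictMonoOn

/-- Let `A` be a `J × n` real matrix.  If `x, y ∈ ℝ^n` are strictly positive,
`log x = Aᵀ β₁` and `log y = Aᵀ β₂` for some `β₁, β₂`, and `A x = A y`, then `x = y`. -/
theorem stmt5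
    (J n : ℕ)
    (A : Matrix (Fin J) (Fin n) ℝ)
    (x y : Fin n → ℝ) (hx : ∀ i, 0 < x i) (hy : ∀ i, 0 < y i)
    (β₁ β₂ : Fin J → ℝ)
    (hβ₁ : (fun i => Real.log (x i)) = A.transpose.mulVec β₁)
    (hβ₂ : (fun i => Real.log (y i)) = A.transpose.mulVec β₂)
    (hAxy : A.mulVec x = A.mulVec y) :
    x = y := by
  have hker : A *ᵥ (x - y) = 0 := by rw [mulVec_sub, hAxy, sub_self]
  have hrow : Real.log ∘ x - Real.log ∘ y = Aᵀ *ᵥ (β₁ - β₂) := by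
    rw [mulVec_sub, ← hβ₁, ← hβ₂]
    rfl
  refine Real.strictMonoOn_log.eq_of_dotProduct_sub_comp_sub_eq_zero hx hy ?_
  rw [hrow]
  exact A.dotProduct_transpose_mulVec_eq_zero _ hker
end

section
/- Let A be a J × n real matrix of full row rank J such that the all-ones vector 1 ∈ ℝ^n lies in the row space of A. Let y ∈ ℝ^n have nonnegative entries with N = Σ_{i=1}^n y(i) > 0. Suppose λ ∈ ℝ^n has strictly positive entries with log λ = Aᵀβ₁ for some β₁ ∈ ℝ^J and A λ = A y (the Poisson likelihood equations), and suppose p ∈ ℝ^n has strictly positive entries with Σ_{i=1}^n p(i) = 1, log p = Aᵀβ₂ for some β₂ ∈ ℝ^J, and A y = α (A p) for some α ∈ ℝ (the multinomial likelihood equations with Lagrange multiplier α). Then α = N and λ = N·p; that is, the maximum likelihood estimates of the cell frequencies under the Poisson and multinomial models coincide. -/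
/-!
Since `1 = Aᵀk` lies in the row space, `k ⬝ᵥ A x = ∑ x` for every `x`, so dotting the
multinomial equations with `k` gives `N = α ∑ p = α`. Then `λ` and `N • p` have the same
subset sums `A λ = A y = N (A p)`, and `log λ - log (N • p) = Aᵀ c` for some `c`, since
`log (N • p) = log N • 1 + log p`. Hence `∑ (log λ - log (N p)) (λ - N p) = c ⬝ᵥ A (λ - N p) = 0`;
as `log` is strictly increasing every summand is nonnegative and vanishes only when
`λ i = N p i`.
-/

open Matrix Real

theorem sum_eq_dotProduct_mulVec_of_transpose_mulVec_eq_one {m ι R : Type*} [Fintype m]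
    [Fintype ι] [CommSemiring R] {A : Matrix m ι R} {k : m → R} (hk : Aᵀ *ᵥ k = 1)
    (x : ι → R) : ∑ i, x i = k ⬝ᵥ (A *ᵥ x) := by
  rw [dotProduct_mulVec, ← mulVec_transpose, hk, one_dotProduct]

theorem log_sub_log_mul_sub_nonneg {a b : ℝ} (ha : 0 < a) (hb : 0 < b) :
    0 ≤ (log a - log b) * (a - b) := by
  rcases le_total a b with hab | hab
  · exact mul_nonneg_of_nonpos_of_nonpos (sub_nonpos.2 (log_le_log ha hab)) (sub_nonpos.2 hab)
  · exact mul_nonneg (sub_nonneg.2 (log_le_log hb hab)) (sub_nonneg.2 hab)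

theorem eq_of_log_sub_log_mul_sub_eq_zero {a b : ℝ} (ha : 0 < a) (hb : 0 < b)
    (h : (log a - log b) * (a - b) = 0) : a = b := by
  rcases mul_eq_zero.1 h with h | h
  · exact log_injOn_pos ha hb (sub_eq_zero.1 h)
  · exact sub_eq_zero.1 h

/-- Uniqueness of the maximum likelihood estimate in a log-linear model. -/
theorem eq_of_mulVec_eq_of_log_sub_log_mem_range {m ι : Type*} [Fintype m] [Fintype ι]
    {A : Matrix m ι ℝ} {u v : ι → ℝ} (hu : ∀ i, 0 < u i) (hv : ∀ i, 0 < v i)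
    (hlog : (fun i => log (u i) - log (v i)) ∈ LinearMap.range Aᵀ.mulVecLin)
    (h : A *ᵥ u = A *ᵥ v) : u = v := by
  obtain ⟨c, hc⟩ := hlog
  have horth : ∑ i, (log (u i) - log (v i)) * (u i - v i) = 0 :=
    calc ∑ i, (log (u i) - log (v i)) * (u i - v i) = (Aᵀ *ᵥ c) ⬝ᵥ (u - v) := by
          rw [← mulVecLin_apply, hc]; rfl
      _ = c ⬝ᵥ (A *ᵥ (u - v)) := by rw [mulVec_transpose, dotProduct_mulVec]
      _ = 0 := by rw [mulVec_sub, h, sub_self, dotProduct_zero]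
  have hterm := (Finset.sum_eq_zero_iff_of_nonneg fun i _ =>
    log_sub_log_mul_sub_nonneg (hu i) (hv i)).1 horth
  funext i
  exact eq_of_log_sub_log_mul_sub_eq_zero (hu i) (hv i) (hterm i (Finset.mem_univ i))

theorem stmt6_general
    (J n : ℕ)
    (A : Matrix (Fin J) (Fin n) ℝ)
    (hone : ∃ k : Fin J → ℝ, (fun _ => (1 : ℝ)) = A.transpose.mulVec k)
    (y : Fin n → ℝ)
    (N : ℝ) (hN : N = ∑ i, y i) (hNpos : 0 < N)
    (lam : Fin n → ℝ) (hlam : ∀ i, 0 < lam i)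
    (β₁ : Fin J → ℝ) (hβ₁ : (fun i => Real.log (lam i)) = A.transpose.mulVec β₁)
    (hlamEq : A.mulVec lam = A.mulVec y)
    (p : Fin n → ℝ) (hp : ∀ i, 0 < p i) (hpsum : ∑ i, p i = 1)
    (β₂ : Fin J → ℝ) (hβ₂ : (fun i => Real.log (p i)) = A.transpose.mulVec β₂)
    (α : ℝ) (hpEq : A.mulVec y = α • A.mulVec p) :
    α = N ∧ lam = N • p := by
  obtain ⟨k, hk⟩ := hone
  have hsum : ∀ x : Fin n → ℝ, ∑ i, x i = k ⬝ᵥ (A *ᵥ x) :=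
    sum_eq_dotProduct_mulVec_of_transpose_mulVec_eq_one hk.symm
  have hαN : α = N :=
    calc α = α * ∑ i, p i := by rw [hpsum, mul_one]
      _ = N := by rw [hsum, hN, hsum, hpEq, dotProduct_smul, smul_eq_mul]
  set S := LinearMap.range Aᵀ.mulVecLin
  have hlog : (fun i => log (lam i) - log ((N • p) i))
      = (fun i => log (lam i)) - (fun i => log (p i)) - log N • fun _ => 1 := by
    funext i
    simp only [Pi.smul_apply, smul_eq_mul, Pi.sub_apply, mul_one,
      log_mul hNpos.ne' (hp i).ne']
    ring
  refine ⟨hαN, eq_of_mulVec_eq_of_log_sub_log_mem_range (A := A) hlam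
    (fun i => mul_pos hNpos (hp i)) ?_ ?_⟩
  · rw [hlog]
    exact S.sub_mem (S.sub_mem ⟨β₁, hβ₁.symm⟩ ⟨β₂, hβ₂.symm⟩) (S.smul_mem _ ⟨k, hk.symm⟩)
  · rw [hlamEq, hpEq, hαN, mulVec_smul]

/-- Suppose `A` has full row rank `J` and the all-ones vector lies in its row
space.  Let `y ≥ 0` with `N = ∑ y i > 0`.  If `λ > 0` satisfies the Poisson likelihood
equations (`log λ = Aᵀβ₁`, `A λ = A y`) and `p > 0` satisfies the multinomial likelihood
equations (`∑ p = 1`, `log p = Aᵀβ₂`, `A y = α (A p)`), then `α = N` and `λ = N·p`. -/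
theorem stmt6
    (J n : ℕ)
    (A : Matrix (Fin J) (Fin n) ℝ)
    (hrank : A.rank = J)
    (hone : ∃ k : Fin J → ℝ, (fun _ => (1 : ℝ)) = A.transpose.mulVec k)
    (y : Fin n → ℝ) (hy : ∀ i, 0 ≤ y i)
    (N : ℝ) (hN : N = ∑ i, y i) (hNpos : 0 < N)
    (lam : Fin n → ℝ) (hlam : ∀ i, 0 < lam i)
    (β₁ : Fin J → ℝ) (hβ₁ : (fun i => Real.log (lam i)) = A.transpose.mulVec β₁)
    (hlamEq : A.mulVec lam = A.mulVec y)
    (p : Fin n → ℝ) (hp : ∀ i, 0 < p i) (hpsum : ∑ i, p i = 1)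
    (β₂ : Fin J → ℝ) (hβ₂ : (fun i => Real.log (p i)) = A.transpose.mulVec β₂)
    (α : ℝ) (hpEq : A.mulVec y = α • A.mulVec p) :
    α = N ∧ lam = N • p :=
  stmt6_general J n A hone y N hN hNpos lam hlam β₁ hβ₁ hlamEq p hp hpsum β₂ hβ₂ α hpEq
end

section
/- Let A be a J × n real matrix. Suppose λ, p ∈ ℝ^n have strictly positive entries, log λ = Aᵀβ₁ and log p = Aᵀβ₂ for some β₁, β₂ ∈ ℝ^J, and λ = N·p for a scalar N > 0 with N ≠ 1. Then the all-ones vector 1 ∈ ℝ^n lies in the row space of A. -/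
open Real

theorem Real.log_comp_smul {ι : Type*} {p : ι → ℝ} (hp : ∀ i, 0 < p i) {N : ℝ} (hN : 0 < N) :
    (fun i => log ((N • p) i)) = log N • (1 : ι → ℝ) + fun i => log (p i) := by
  funext i
  simp [Real.log_mul hN.ne' (hp i).ne']

theorem Submodule.one_mem_of_log_mem_of_log_smul_mem {ι : Type*} (S : Submodule ℝ (ι → ℝ))
    {p : ι → ℝ} (hp : ∀ i, 0 < p i) {N : ℝ} (hN : 0 < N) (hN1 : N ≠ 1)
    (hNp : (fun i => log ((N • p) i)) ∈ S) (hp' : (fun i => log (p i)) ∈ S) :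
    (1 : ι → ℝ) ∈ S := by
  have hdiff : log N • (1 : ι → ℝ) ∈ S := by
    have := S.sub_mem hNp hp'
    rwa [Real.log_comp_smul hp hN, add_sub_cancel_right] at this
  exact (S.smul_mem_iff (Real.log_ne_zero_of_pos_of_ne_one hN hN1)).mp hdiff

theorem stmt7_general
    (J n : ℕ)
    (A : Matrix (Fin J) (Fin n) ℝ)
    (lam p : Fin n → ℝ) (hp : ∀ i, 0 < p i)
    (β₁ β₂ : Fin J → ℝ)
    (hβ₁ : (fun i => Real.log (lam i)) = A.transpose.mulVec β₁)
    (hβ₂ : (fun i => Real.log (p i)) = A.transpose.mulVec β₂)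
    (N : ℝ) (hNpos : 0 < N) (hN1 : N ≠ 1)
    (hNp : lam = N • p) :
    ∃ k : Fin J → ℝ, (fun _ => (1 : ℝ)) = A.transpose.mulVec k := by
  subst hNp
  obtain ⟨k, hk⟩ := (LinearMap.range A.transpose.mulVecLin).one_mem_of_log_mem_of_log_smul_mem
    hp hNpos hN1 ⟨β₁, hβ₁.symm⟩ ⟨β₂, hβ₂.symm⟩
  exact ⟨k, hk.symm⟩

/-- Let `A` be a `J × n` real matrix.  Suppose `λ, p > 0`,
`log λ = Aᵀβ₁`, `log p = Aᵀβ₂`, and `λ = N·p` for a scalar `N > 0` with `N ≠ 1`.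
Then the all-ones vector lies in the row space of `A`. -/
theorem stmt7
    (J n : ℕ)
    (A : Matrix (Fin J) (Fin n) ℝ)
    (lam p : Fin n → ℝ) (hlam : ∀ i, 0 < lam i) (hp : ∀ i, 0 < p i)
    (β₁ β₂ : Fin J → ℝ)
    (hβ₁ : (fun i => Real.log (lam i)) = A.transpose.mulVec β₁)
    (hβ₂ : (fun i => Real.log (p i)) = A.transpose.mulVec β₂)
    (N : ℝ) (hNpos : 0 < N) (hN1 : N ≠ 1)
    (hNp : lam = N • p) :
    ∃ k : Fin J → ℝ, (fun _ => (1 : ℝ)) = A.transpose.mulVec k :=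
  stmt7_general J n A lam p hp β₁ β₂ hβ₁ hβ₂ N hNpos hN1 hNp
end

section
/- Let A be a J × n matrix with entries in {0,1}, of full row rank J, such that no column of A is the zero vector and the all-ones vector 1 ∈ ℝ^n does not lie in the row space of A. Let y ∈ ℝ^n have nonnegative entries and set t = A y ∈ ℝ^J. Consider the set 𝒟 = {β ∈ ℝ^J : β_j ≤ 0 for all j, and Σ_{i=1}^n exp((Aᵀβ)_i) = 1}. Then there exists a unique β* ∈ 𝒟 such that Σ_j t_j β_j ≤ Σ_j t_j β*_j for all β ∈ 𝒟 if and only if every component of t is strictly positive. -/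
/-!
Rescaling is the basic move: for `β ≤ 0` with `∑ᵢ exp (Aᵀβ)ᵢ ≤ 1` some `l ∈ [0, 1]` puts `l • β`
back in `𝒟` (intermediate value theorem, the sum at `l = 0` being `n ≥ 1`), and since the
objective `t ⬝ᵥ β` is `≤ 0` on `𝒟`, rescaling never decreases it.

If `t > 0`, the superlevel sets of the objective on `𝒟` are compact, so a maximizer exists. Two
distinct maximizers have distinct images under the injective map `Aᵀ`, so by strict convexity of
`exp` their midpoint has sum `< 1`; rescaling it with `l < 1` strictly increases the objective
unless that is `0`, which forces both maximizers to vanish.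

If `t j = 0`, lowering `β j` by one at the maximizer keeps the objective and, `A` being
nonnegative, keeps the sum `≤ 1`. By uniqueness its rescaling is the maximizer itself, which
forces the maximizer to be supported on `j`. A cell outside `S_j` would then contribute `exp 0 = 1`
to a sum of `n ≥ 2` positive terms equal to `1`, so row `j` of `A` is `1`.
-/

open Real Finset Filter Topology Matrix

section SumExp

variable {ι : Type*} [Fintype ι]

lemma exists_mem_Icc_sum_exp_mul_eq_one [Nonempty ι] {w : ι → ℝ} (hw : ∑ i, exp (w i) ≤ 1) :
    ∃ l ∈ Set.Icc (0 : ℝ) 1, ∑ i, exp (l * w i) = 1 := by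
  have hcont : ContinuousOn (fun l : ℝ => ∑ i, exp (l * w i)) (Set.Icc 0 1) := by fun_prop
  have hcard : (1 : ℝ) ≤ Fintype.card ι := by exact_mod_cast Fintype.card_pos
  exact intermediate_value_Icc' zero_le_one hcont ⟨by simpa using hw, by simpa using hcard⟩

lemma neg_of_sum_exp_eq_one [Nontrivial ι] {w : ι → ℝ} (hw : ∑ i, exp (w i) = 1) (i : ι) :
    w i < 0 := by
  obtain ⟨k, hk⟩ := exists_ne i
  rw [← exp_lt_one_iff, ← hw]
  exact single_lt_sum hk (mem_univ i) (mem_univ k) (exp_pos _) fun _ _ _ => (exp_pos _).le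

lemma sum_exp_midpoint_lt_one {u v : ι → ℝ} (huv : u ≠ v) (hu : ∑ i, exp (u i) = 1)
    (hv : ∑ i, exp (v i) = 1) : ∑ i, exp (((2 : ℝ)⁻¹ • (u + v)) i) < 1 := by
  obtain ⟨i₀, hi₀⟩ := Function.ne_iff.mp huv
  have hmid : ∀ i, exp (((2 : ℝ)⁻¹ • (u + v)) i) = exp ((2 : ℝ)⁻¹ • u i + (2 : ℝ)⁻¹ • v i) :=
    fun i => by simp [mul_add]
  calc ∑ i, exp (((2 : ℝ)⁻¹ • (u + v)) i)
      < ∑ i, ((2 : ℝ)⁻¹ • exp (u i) + (2 : ℝ)⁻¹ • exp (v i)) := by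
        simp only [hmid]
        refine sum_lt_sum (fun i _ => convexOn_exp.2 trivial trivial ?_ ?_ ?_)
          ⟨i₀, mem_univ _, strictConvexOn_exp.2 trivial trivial hi₀ ?_ ?_ ?_⟩ <;> norm_num
    _ = 1 := by simp only [smul_eq_mul, sum_add_distrib, ← mul_sum, hu, hv]; norm_num

end SumExp

section Dot

variable {κ : Type*} [Fintype κ] {t β : κ → ℝ}

lemma dotProduct_nonpos_of_nonneg_of_nonpos (ht : 0 ≤ t) (hβ : β ≤ 0) : t ⬝ᵥ β ≤ 0 :=
  sum_nonpos fun j _ => mul_nonpos_of_nonneg_of_nonpos (ht j) (hβ j)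

lemma eq_zero_of_dotProduct_eq_zero (ht : ∀ j, 0 < t j) (hβ : β ≤ 0) (h : t ⬝ᵥ β = 0) :
    β = 0 := by
  have hterm := (sum_eq_zero_iff_of_nonpos fun j _ =>
    mul_nonpos_of_nonneg_of_nonpos (ht j).le (hβ j)).mp h
  exact funext fun j => (mul_eq_zero.mp (hterm j (mem_univ j))).resolve_left (ht j).ne'

lemma exists_forall_dotProduct_le {D : Set (κ → ℝ)} (hD : IsClosed D) (hne : D.Nonempty)
    (hnonpos : ∀ β ∈ D, β ≤ 0) (ht : ∀ j, 0 < t j) :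
    ∃ β ∈ D, ∀ β' ∈ D, t ⬝ᵥ β' ≤ t ⬝ᵥ β := by
  obtain ⟨β₀, hβ₀⟩ := hne
  have hf : Continuous (t ⬝ᵥ ·) := by fun_prop
  set K := D ∩ {β | t ⬝ᵥ β₀ ≤ t ⬝ᵥ β}
  -- on `K`, each term `t j * β j` is squeezed between `t ⬝ᵥ β₀` and `0`
  have hK : K ⊆ Set.Icc (fun j => t ⬝ᵥ β₀ / t j) 0 := by
    rintro β ⟨hβD, hβ⟩
    classical
    refine ⟨fun j => ?_, hnonpos β hβD⟩
    have hrest : ∑ k ∈ univ.erase j, t k * β k ≤ 0 :=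
      sum_nonpos fun k _ => mul_nonpos_of_nonneg_of_nonpos (ht k).le (hnonpos β hβD k)
    have hsplit := add_sum_erase univ (fun k => t k * β k) (mem_univ j)
    rw [div_le_iff₀ (ht j)]
    change t ⬝ᵥ β₀ ≤ ∑ k, t k * β k at hβ
    linarith
  have hKc : IsCompact K :=
    isCompact_Icc.of_isClosed_subset (hD.inter (isClosed_le continuous_const hf)) hK
  obtain ⟨β, hβK, hβmax⟩ := hKc.exists_isMaxOn ⟨β₀, hβ₀, le_refl (t ⬝ᵥ β₀)⟩ hf.continuousOn
  refine ⟨β, hβK.1, fun β' hβ' => ?_⟩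
  by_cases h : t ⬝ᵥ β₀ ≤ t ⬝ᵥ β'
  · exact hβmax ⟨hβ', h⟩
  · exact (not_le.mp h).le.trans hβK.2

end Dot

section Feasible

variable {κ ι : Type*} [Fintype κ]

lemma nontrivial_of_ones_not_mem_range {A : Matrix κ ι ℝ}
    (h01 : ∀ j i, A j i = 0 ∨ A j i = 1)
    (hcol : ∀ i, ∃ j, A j i ≠ 0) (hone : ¬ ∃ k, (fun _ => (1 : ℝ)) = Aᵀ *ᵥ k) :
    Nontrivial ι := by
  classical
  by_contra hnt
  rw [not_nontrivial_iff_subsingleton] at hnt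
  rcases isEmpty_or_nonempty ι with hι | ⟨⟨i⟩⟩
  · exact hone ⟨0, Subsingleton.elim _ _⟩
  · obtain ⟨j, hj⟩ := hcol i
    refine hone ⟨Pi.single j 1, funext fun i' => ?_⟩
    rw [Subsingleton.elim i' i, mulVec_single_one]
    exact ((h01 j i).resolve_left hj).symm

variable [Fintype ι] (A : Matrix κ ι ℝ)

def feasibleSet : Set (κ → ℝ) :=
  {β | (∀ j, β j ≤ 0) ∧ ∑ i, exp ((Aᵀ *ᵥ β) i) = 1}

variable {A}

lemma injective_mulVec_transpose (hrank : A.rank = Fintype.card κ) :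
    Function.Injective Aᵀ.mulVec := by
  rw [mulVec_injective_iff, linearIndependent_iff_card_eq_finrank_span, Set.finrank,
    ← rank_eq_finrank_span_cols, rank_transpose, hrank]

lemma isClosed_feasibleSet : IsClosed (feasibleSet A) := by
  have : feasibleSet A = (⋂ j, {β | β j ≤ 0}) ∩ (fun β => ∑ i, exp ((Aᵀ *ᵥ β) i)) ⁻¹' {1} := by
    ext β; simp [feasibleSet]
  rw [this]
  exact (isClosed_iInter fun j => isClosed_le (continuous_apply j) continuous_const).inter
    (isClosed_singleton.preimage (by fun_prop))

lemma exists_smul_mem_feasibleSet [Nonempty ι] {β : κ → ℝ} (hβ : β ≤ 0)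
    (hS : ∑ i, exp ((Aᵀ *ᵥ β) i) ≤ 1) :
    ∃ l ∈ Set.Icc (0 : ℝ) 1, l • β ∈ feasibleSet A := by
  obtain ⟨l, hl, hlS⟩ := exists_mem_Icc_sum_exp_mul_eq_one hS
  exact ⟨l, hl, fun j => mul_nonpos_of_nonneg_of_nonpos hl.1 (hβ j),
    by simpa [mulVec_smul] using hlS⟩

lemma feasibleSet_nonempty [Nonempty ι] (hA : ∀ j i, 0 ≤ A j i)
    (hcol : ∀ i, ∃ j, A j i ≠ 0) : (feasibleSet A).Nonempty := by
  have hs : ∀ i, 0 < ∑ j, A j i := fun i => by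
    obtain ⟨j, hj⟩ := hcol i
    exact sum_pos' (fun j _ => hA j i) ⟨j, mem_univ j, (hA j i).lt_of_ne' hj⟩
  have hlim : Tendsto (fun N : ℝ => ∑ i, exp ((Aᵀ *ᵥ fun _ => -N) i)) atTop (𝓝 0) := by
    have hterm : ∀ i, Tendsto (fun N : ℝ => exp ((Aᵀ *ᵥ fun _ => -N) i)) atTop (𝓝 0) := by
      intro i
      have hlin (N : ℝ) : -(∑ j, A j i) * N = (Aᵀ *ᵥ fun _ => -N) i := by
        simp [mulVec, dotProduct, sum_mul]
      exact tendsto_exp_atBot.comp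
        ((tendsto_id.const_mul_atTop_of_neg (neg_neg_of_pos (hs i))).congr hlin)
    simpa using tendsto_finsetSum univ fun i _ => hterm i
  obtain ⟨N, hN, hN0⟩ :=
    ((hlim.eventually (gt_mem_nhds one_pos)).and (eventually_ge_atTop 0)).exists
  obtain ⟨l, -, hl⟩ := exists_smul_mem_feasibleSet (β := fun _ => -N)
    (fun _ => neg_nonpos.mpr hN0) hN.le
  exact ⟨_, hl⟩

lemma eq_of_forall_dotProduct_le [Nonempty ι] (hinj : Function.Injective Aᵀ.mulVec)
    {t : κ → ℝ} (ht : ∀ j, 0 < t j) {β₁ β₂ : κ → ℝ} (h₁ : β₁ ∈ feasibleSet A)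
    (h₂ : β₂ ∈ feasibleSet A) (hmax₁ : ∀ β ∈ feasibleSet A, t ⬝ᵥ β ≤ t ⬝ᵥ β₁)
    (hle : t ⬝ᵥ β₁ ≤ t ⬝ᵥ β₂) : β₁ = β₂ := by
  by_contra hne
  have hm : t ⬝ᵥ β₂ = t ⬝ᵥ β₁ := le_antisymm (hmax₁ β₂ h₂) hle
  set βm := (2 : ℝ)⁻¹ • (β₁ + β₂)
  have hβm : βm ≤ 0 := fun j => by
    have := h₁.1 j; have := h₂.1 j
    simp only [βm, Pi.smul_apply, Pi.add_apply, Pi.zero_apply, smul_eq_mul]; linarith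
  have hSm : ∑ i, exp ((Aᵀ *ᵥ βm) i) < 1 := by
    rw [mulVec_smul, mulVec_add]; exact sum_exp_midpoint_lt_one (hinj.ne hne) h₁.2 h₂.2
  obtain ⟨l, ⟨hl0, hl1⟩, hlD⟩ := exists_smul_mem_feasibleSet hβm hSm.le
  have hl : l < 1 := hl1.lt_of_ne <| by rintro rfl; simp [feasibleSet] at hlD; linarith [hlD.2]
  have hfl : t ⬝ᵥ (l • βm) = l * (t ⬝ᵥ β₁) := by
    simp only [βm, dotProduct_smul, dotProduct_add, hm, smul_eq_mul]; ring
  have hm0 : t ⬝ᵥ β₁ = 0 := le_antisymm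
    (dotProduct_nonpos_of_nonneg_of_nonpos (fun j => (ht j).le) h₁.1)
    (by nlinarith [hfl ▸ hmax₁ _ hlD])
  exact hne ((eq_zero_of_dotProduct_eq_zero ht h₁.1 hm0).trans
    (eq_zero_of_dotProduct_eq_zero ht h₂.1 (hm.trans hm0)).symm)

lemma forall_eq_one_of_single_mem_feasibleSet [DecidableEq κ] [Nontrivial ι]
    (h01 : ∀ j i, A j i = 0 ∨ A j i = 1) {j : κ} {c : ℝ}
    (h : Pi.single j c ∈ feasibleSet A) (i : ι) : A j i = 1 := by
  have hneg := neg_of_sum_exp_eq_one h.2 i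
  refine (h01 j i).resolve_left fun h0 => ?_
  simp [mulVec_single, h0] at hneg

lemma pos_of_existsUnique_forall_dotProduct_le [Nontrivial ι]
    (h01 : ∀ j i, A j i = 0 ∨ A j i = 1) (hone : ¬ ∃ k, (fun _ => (1 : ℝ)) = Aᵀ *ᵥ k)
    {t : κ → ℝ} (ht : 0 ≤ t)
    (hu : ∃! β, β ∈ feasibleSet A ∧ ∀ β' ∈ feasibleSet A, t ⬝ᵥ β' ≤ t ⬝ᵥ β) (j : κ) :
    0 < t j := by
  classical
  obtain ⟨β, ⟨hβ, hmax⟩, huniq⟩ := hu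
  refine (ht j).lt_of_ne' fun htj => hone ⟨Pi.single j 1, ?_⟩
  set βc := β - Pi.single j 1
  have hβc : βc ≤ 0 := fun k => by
    by_cases hk : k = j
    · subst hk; simp only [βc, Pi.sub_apply, Pi.single_eq_same, Pi.zero_apply]; linarith [hβ.1 k]
    · simp [βc, hk, hβ.1 k]
  have hSc : ∑ i, exp ((Aᵀ *ᵥ βc) i) ≤ 1 := hβ.2 ▸ sum_le_sum fun i _ => exp_le_exp.mpr <| by
    have hAji : 0 ≤ A j i := by rcases h01 j i with h | h <;> simp [h]
    simp [βc, mulVec_sub, hAji]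
  obtain ⟨l, ⟨hl0, hl1⟩, hlD⟩ := exists_smul_mem_feasibleSet hβc hSc
  have hfl : t ⬝ᵥ (l • βc) = l * (t ⬝ᵥ β) := by
    simp [βc, dotProduct_sub, dotProduct_single, htj]
  have hm := dotProduct_nonpos_of_nonneg_of_nonpos ht hβ.1
  have heq : l • βc = β :=
    huniq _ ⟨hlD, fun β' hβ' => (hmax β' hβ').trans (by rw [hfl]; nlinarith)⟩
  have hl : l ≠ 1 := by
    rintro rfl
    simpa [βc] using congrFun heq j
  have hsingle : β = Pi.single j (β j) := funext fun k => by
    by_cases hk : k = j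
    · subst hk; simp
    · have := congrFun heq k
      simp only [βc, Pi.smul_apply, Pi.sub_apply, Pi.single_eq_of_ne hk, sub_zero,
        smul_eq_mul] at this
      rw [Pi.single_eq_of_ne hk]
      exact (mul_left_eq_self₀.mp this).resolve_left hl
  rw [mulVec_single_one]
  exact funext fun i => (forall_eq_one_of_single_mem_feasibleSet h01 (hsingle ▸ hβ) i).symm

end Feasible

/-- Let `A` be a `J × n` 0-1 matrix of full row rank with no zero column such
that the all-ones vector is not in the row space of `A`.  Let `y ≥ 0` and `t = A y`.  On
`𝒟 = {β : β ≤ 0, ∑ i exp((Aᵀβ)_i) = 1}` the linear functional `β ↦ ∑ j t_j β_j` has a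
unique maximizer iff every component of `t` is strictly positive. -/
theorem stmt8
    (J n : ℕ)
    (A : Matrix (Fin J) (Fin n) ℝ)
    (h01 : ∀ j i, A j i = 0 ∨ A j i = 1)
    (hrank : A.rank = J)
    (hcol : ∀ i : Fin n, ∃ j : Fin J, A j i ≠ 0)
    (hone : ¬ ∃ k : Fin J → ℝ, (fun _ => (1 : ℝ)) = A.transpose.mulVec k)
    (y : Fin n → ℝ) (hy : ∀ i, 0 ≤ y i)
    (t : Fin J → ℝ) (ht : t = A.mulVec y)
    (𝒟 : Set (Fin J → ℝ))
    (h𝒟 : 𝒟 = {β | (∀ j, β j ≤ 0) ∧ ∑ i, Real.exp (A.transpose.mulVec β i) = 1}) :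
    (∃! βs : Fin J → ℝ, βs ∈ 𝒟 ∧ ∀ β ∈ 𝒟, ∑ j, t j * β j ≤ ∑ j, t j * βs j) ↔
      ∀ j, 0 < t j := by
  have hA : ∀ j i, 0 ≤ A j i := fun j i => by rcases h01 j i with h | h <;> simp [h]
  have := nontrivial_of_ones_not_mem_range h01 hcol hone
  change 𝒟 = feasibleSet A at h𝒟
  subst h𝒟
  refine ⟨pos_of_existsUnique_forall_dotProduct_le h01 hone ?_, fun htpos => ?_⟩
  · rw [ht]; exact fun j => dotProduct_nonneg_of_nonneg (hA j) hy
  obtain ⟨β, hβ, hmax⟩ := exists_forall_dotProduct_le isClosed_feasibleSet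
    (feasibleSet_nonempty hA hcol) (fun β hβ => hβ.1) htpos
  exact ⟨β, ⟨hβ, hmax⟩, fun β' ⟨hβ', hmax'⟩ =>
    (eq_of_forall_dotProduct_le (injective_mulVec_transpose (by simpa using hrank)) htpos hβ
      hβ' hmax (hmax' β hβ)).symm⟩
end

section
/- Let A be a J × n matrix with nonnegative integer entries and full row rank J, and let D be a kernel basis matrix of A. For any vectors δ₁, δ₂ ∈ ℝ^n, each with strictly positive entries summing to 1, there exist a vector δ ∈ ℝ^n with strictly positive entries summing to 1 and a scalar α such that A δ = α (A δ₁) and D (log δ) = D (log δ₂). Moreover, if the all-ones vector 1 ∈ ℝ^n lies in the row space of A, then necessarily α = 1, i.e., A δ = A δ₁. -/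
/-!
The required `δ` is an exponential tilt `δ₂ · exp η` with `η = Aᵀθ` in the row space of `A`;
then `log δ - log δ₂ = η` is annihilated by `D`, whose rows lie in `Ker A`.
Such a tilt is obtained by maximizing the linear functional `η ↦ δ₁ ⬝ᵥ η` over the row space
subject to `∑ δ₂ exp η ≤ 1`. Positivity of `δ₁` turns the upper bounds `ηᵢ ≤ -log δ₂ᵢ` into
lower bounds on the part of the feasible set where `δ₁ ⬝ᵥ η ≥ 0`, so a maximizer exists; the
constraint is active there, and the Lagrange condition says that `A δ` is a multiple of `A δ₁`.
If `1 = Aᵀ k`, then `∑ δ = k ⬝ᵥ A δ`, which forces `α = 1`.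
-/

open Matrix Real Filter Topology

section ExponentialTilt

variable {ι : Type*}

noncomputable def expTilt (q η : ι → ℝ) : ι → ℝ := fun i => q i * exp (η i)

lemma expTilt_pos {q : ι → ℝ} (hq : ∀ i, 0 < q i) (η : ι → ℝ) (i : ι) : 0 < expTilt q η i :=
  mul_pos (hq i) (exp_pos _)

lemma log_expTilt {q : ι → ℝ} (hq : ∀ i, 0 < q i) (η : ι → ℝ) :
    (fun i => log (expTilt q η i)) = (fun i => log (q i)) + η := by
  funext i
  simp [expTilt, log_mul (hq i).ne' (exp_pos _).ne']

variable [Fintype ι]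

lemma continuous_sum_expTilt (q : ι → ℝ) : Continuous fun η => ∑ i, expTilt q η i := by
  unfold expTilt
  fun_prop

noncomputable def dotProductCLM (v : ι → ℝ) : (ι → ℝ) →L[ℝ] ℝ :=
  ∑ i, v i • ContinuousLinearMap.proj i

@[simp]
lemma dotProductCLM_apply (v w : ι → ℝ) : dotProductCLM v w = v ⬝ᵥ w := by
  simp [dotProductCLM, dotProduct]

lemma hasStrictFDerivAt_sum_expTilt (q η : ι → ℝ) :
    HasStrictFDerivAt (fun ζ => ∑ i, expTilt q ζ i) (dotProductCLM (expTilt q η)) η := by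
  refine (HasStrictFDerivAt.fun_sum (u := Finset.univ) fun i _ =>
    ((hasStrictFDerivAt_apply i η).exp).const_mul (q i)).congr_fderiv ?_
  ext w
  simp [expTilt, dotProduct, mul_assoc]

lemma isCompact_setOf_sum_expTilt_le_one {p q : ι → ℝ} (hp : ∀ i, 0 < p i) (hq : ∀ i, 0 < q i) :
    IsCompact {η : ι → ℝ | ∑ i, expTilt q η i ≤ 1 ∧ 0 ≤ p ⬝ᵥ η} := by
  set c : ι → ℝ := fun i => -log (q i)
  have hle_c : ∀ η : ι → ℝ, ∑ i, expTilt q η i ≤ 1 → ∀ i, η i ≤ c i := by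
    intro η hη i
    have hi : exp (log (q i) + η i) ≤ 1 := by
      rw [exp_add, exp_log (hq i)]
      exact (Finset.single_le_sum (fun k _ => (expTilt_pos hq η k).le) (Finset.mem_univ i)).trans hη
    linarith [exp_le_one_iff.mp hi]
  have hsub : {η : ι → ℝ | ∑ i, expTilt q η i ≤ 1 ∧ 0 ≤ p ⬝ᵥ η} ⊆
      Set.univ.pi fun i => Set.Icc (c i - p ⬝ᵥ c / p i) (c i) := by
    rintro η ⟨hη, hpη⟩ i -
    have hgap := hle_c η hη
    -- each term of `p ⬝ᵥ (c - η) ≤ p ⬝ᵥ c` is nonnegative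
    have hi : p i * (c i - η i) ≤ p ⬝ᵥ c := by
      calc p i * (c i - η i) ≤ p ⬝ᵥ (c - η) :=
            Finset.single_le_sum (f := fun k => p k * (c - η) k)
              (fun k _ => mul_nonneg (hp k).le (sub_nonneg.mpr (hgap k))) (Finset.mem_univ i)
        _ ≤ p ⬝ᵥ c := by rw [dotProduct_sub]; linarith
    refine ⟨?_, hgap i⟩
    rw [sub_le_comm, le_div_iff₀ (hp i), mul_comm]
    exact hi
  refine (isCompact_univ_pi fun i => isCompact_Icc).of_isClosed_subset ?_ hsub
  exact (isClosed_le (continuous_sum_expTilt q) continuous_const).inter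
    (isClosed_le continuous_const (continuous_const.dotProduct continuous_id))

variable {W : Submodule ℝ (ι → ℝ)} {p q : ι → ℝ}

lemma exists_isMaxOn_dotProduct (hp : ∀ i, 0 < p i) (hq : ∀ i, 0 < q i) (hqsum : ∑ i, q i = 1) :
    ∃ η ∈ W, ∑ i, expTilt q η i ≤ 1 ∧
      IsMaxOn (p ⬝ᵥ ·) {ζ | ζ ∈ W ∧ ∑ i, expTilt q ζ i ≤ 1} η := by
  have hK : IsCompact ((W : Set (ι → ℝ)) ∩ {η | ∑ i, expTilt q η i ≤ 1 ∧ 0 ≤ p ⬝ᵥ η}) :=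
    (isCompact_setOf_sum_expTilt_le_one hp hq).inter_left W.closed_of_finiteDimensional
  have h0 : (0 : ι → ℝ) ∈ (W : Set (ι → ℝ)) ∩ {η | ∑ i, expTilt q η i ≤ 1 ∧ 0 ≤ p ⬝ᵥ η} :=
    ⟨W.zero_mem, by simp [expTilt, hqsum]⟩
  obtain ⟨η, ⟨hηW, hη, hpη⟩, hmax⟩ :=
    hK.exists_isMaxOn ⟨0, h0⟩ (continuous_const.dotProduct continuous_id).continuousOn
  refine ⟨η, hηW, hη, fun ζ ⟨hζW, hζ⟩ => ?_⟩
  rcases le_or_gt 0 (p ⬝ᵥ ζ) with hpζ | hpζ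
  · exact hmax ⟨hζW, hζ, hpζ⟩
  · exact (hpζ.trans_le hpη).le

lemma sum_expTilt_eq_one_of_isMaxOn (hW : ∃ w ∈ W, p ⬝ᵥ w ≠ 0) {η : ι → ℝ} (hηW : η ∈ W)
    (hη : ∑ i, expTilt q η i ≤ 1)
    (hmax : IsMaxOn (p ⬝ᵥ ·) {ζ | ζ ∈ W ∧ ∑ i, expTilt q ζ i ≤ 1} η) :
    ∑ i, expTilt q η i = 1 := by
  obtain ⟨w, hwW, hpw⟩ : ∃ w ∈ W, 0 < p ⬝ᵥ w := by
    obtain ⟨w, hwW, hw⟩ := hW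
    rcases hw.lt_or_gt with hneg | hpos
    · exact ⟨-w, W.neg_mem hwW, by rw [dotProduct_neg]; linarith⟩
    · exact ⟨w, hwW, hpos⟩
  refine hη.eq_of_not_lt fun hlt => ?_
  -- a small step from `η` along `w` stays feasible and increases `p ⬝ᵥ ·`
  have hcont : Continuous fun t : ℝ => ∑ i, expTilt q (η + t • w) i :=
    (continuous_sum_expTilt q).comp (continuous_const.add (continuous_id.smul continuous_const))
  have hnear : ∀ᶠ t in 𝓝[>] (0 : ℝ), ∑ i, expTilt q (η + t • w) i < 1 :=
    nhdsWithin_le_nhds (hcont.continuousAt.eventually_lt continuousAt_const (by simpa using hlt))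
  obtain ⟨t, ht, htpos⟩ := (hnear.and self_mem_nhdsWithin).exists
  have : p ⬝ᵥ (η + t • w) ≤ p ⬝ᵥ η := hmax ⟨W.add_mem hηW (W.smul_mem t hwW), ht.le⟩
  rw [dotProduct_add, dotProduct_smul, smul_eq_mul] at this
  linarith [mul_pos htpos hpw]

lemma exists_dotProduct_expTilt_eq_mul (hW : ∃ w ∈ W, p ⬝ᵥ w ≠ 0) {η : ι → ℝ} (hηW : η ∈ W)
    (hη : ∑ i, expTilt q η i = 1)
    (hmax : IsMaxOn (p ⬝ᵥ ·) {ζ | ζ ∈ W ∧ ∑ i, expTilt q ζ i ≤ 1} η) :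
    ∃ α : ℝ, ∀ w ∈ W, expTilt q η ⬝ᵥ w = α * (p ⬝ᵥ w) := by
  let η' : W := ⟨η, hηW⟩
  have hextr : IsLocalExtrOn (fun ζ : W => p ⬝ᵥ ζ)
      {ζ : W | ∑ i, expTilt q ζ i = ∑ i, expTilt q η' i} η' :=
    Or.inr (IsMaxOn.localize fun ζ hζ => hmax ⟨ζ.2, (hζ.trans hη).le⟩)
  have hf : HasStrictFDerivAt (fun ζ : W => ∑ i, expTilt q ζ i)
      ((dotProductCLM (expTilt q η)).comp W.subtypeL) η' :=
    HasStrictFDerivAt.comp (g := fun ζ => ∑ i, expTilt q ζ i) η'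
      (hasStrictFDerivAt_sum_expTilt q η) W.subtypeL.hasStrictFDerivAt
  have hφ : HasStrictFDerivAt (fun ζ : W => p ⬝ᵥ ζ) ((dotProductCLM p).comp W.subtypeL) η' := by
    have := (dotProductCLM p).hasStrictFDerivAt.comp η' W.subtypeL.hasStrictFDerivAt
    simpa [Function.comp_def] using this
  obtain ⟨a, b, hab, hlin⟩ := hextr.exists_multipliers_of_hasStrictFDerivAt_1d hf hφ
  have hw : ∀ w ∈ W, a * (expTilt q η ⬝ᵥ w) + b * (p ⬝ᵥ w) = 0 := fun w hw => by
    simpa using congrArg (· ⟨w, hw⟩) hlin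
  have ha : a ≠ 0 := by
    rintro rfl
    obtain ⟨w, hwW, hpw⟩ := hW
    have hb : b ≠ 0 := by simpa using hab
    simpa [hb, hpw] using hw w hwW
  refine ⟨-b / a, fun w hwW => ?_⟩
  field_simp
  linarith [hw w hwW]

theorem exists_mem_sum_expTilt_eq_one_dotProduct_eq (hp : ∀ i, 0 < p i) (hq : ∀ i, 0 < q i)
    (hqsum : ∑ i, q i = 1) (hW : ∃ w ∈ W, p ⬝ᵥ w ≠ 0) :
    ∃ η ∈ W, ∑ i, expTilt q η i = 1 ∧ ∃ α : ℝ, ∀ w ∈ W, expTilt q η ⬝ᵥ w = α * (p ⬝ᵥ w) := by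
  obtain ⟨η, hηW, hη, hmax⟩ := exists_isMaxOn_dotProduct (W := W) hp hq hqsum
  have hone := sum_expTilt_eq_one_of_isMaxOn hW hηW hη hmax
  exact ⟨η, hηW, hone, exists_dotProduct_expTilt_eq_mul hW hηW hone hmax⟩

end ExponentialTilt

section MatrixForm

variable {m ι : Type*} [Fintype ι]

lemma mulVec_ne_zero_of_nonneg {A : Matrix m ι ℝ} (hA : ∀ j i, 0 ≤ A j i) (hA₀ : A ≠ 0)
    {v : ι → ℝ} (hv : ∀ i, 0 < v i) : A *ᵥ v ≠ 0 := by
  obtain ⟨j, i, hji⟩ : ∃ j i, A j i ≠ 0 := by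
    by_contra! h
    exact hA₀ (Matrix.ext h)
  refine fun h => (congrFun h j).not_gt ?_
  exact Finset.sum_pos' (fun k _ => mul_nonneg (hA j k) (hv k).le)
    ⟨i, Finset.mem_univ i, mul_pos ((hA j i).lt_of_ne' hji) (hv i)⟩

lemma mul_transpose_eq_zero {l : Type*} {A : Matrix m ι ℝ} {D : Matrix l ι ℝ}
    (hD : ∀ k, D k ∈ LinearMap.ker A.mulVecLin) : D * Aᵀ = 0 := by
  ext k j
  simpa [mul_apply, mulVec, dotProduct, mul_comm] using congrFun (hD k) j

variable [Fintype m]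

theorem exists_sum_expTilt_eq_one_mulVec_eq_smul (A : Matrix m ι ℝ) {p q : ι → ℝ}
    (hp : ∀ i, 0 < p i) (hq : ∀ i, 0 < q i) (hqsum : ∑ i, q i = 1) (hAp : A *ᵥ p ≠ 0) :
    ∃ θ : m → ℝ, ∑ i, expTilt q (Aᵀ *ᵥ θ) i = 1 ∧
      ∃ α : ℝ, A *ᵥ expTilt q (Aᵀ *ᵥ θ) = α • A *ᵥ p := by
  classical
  have hW : ∃ w ∈ LinearMap.range Aᵀ.mulVecLin, p ⬝ᵥ w ≠ 0 :=
    ⟨Aᵀ *ᵥ (A *ᵥ p), LinearMap.mem_range_self _ _, by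
      rwa [dotProduct_mulVec, vecMul_transpose, Ne, dotProduct_self_eq_zero]⟩
  obtain ⟨_, ⟨θ, rfl⟩, hsum, α, hα⟩ := exists_mem_sum_expTilt_eq_one_dotProduct_eq hp hq hqsum hW
  refine ⟨θ, hsum, α, funext fun j => ?_⟩
  have hj := hα _ ⟨Pi.single j 1, rfl⟩
  simp only [mulVecLin_apply, dotProduct_mulVec, vecMul_transpose, dotProduct_single, mul_one]
    at hj
  rwa [Pi.smul_apply, smul_eq_mul]

lemma sum_eq_dotProduct_mulVec {A : Matrix m ι ℝ} {k : m → ℝ}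
    (hk : (fun _ => (1 : ℝ)) = Aᵀ *ᵥ k) (v : ι → ℝ) : ∑ i, v i = k ⬝ᵥ A *ᵥ v := by
  rw [dotProduct_mulVec, ← mulVec_transpose, ← hk]
  simp [dotProduct]

end MatrixForm

theorem stmt11_general
    (J n : ℕ)
    (A : Matrix (Fin J) (Fin n) ℝ)
    (hnat : ∀ j i, ∃ m : ℕ, A j i = (m : ℝ))
    (D : Matrix (Fin (n - J)) (Fin n) ℝ)
    (hDspan : Submodule.span ℝ (Set.range (fun l => D l)) = LinearMap.ker A.mulVecLin)
    (δ₁ δ₂ : Fin n → ℝ)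
    (hδ₁ : ∀ i, 0 < δ₁ i) (hδ₁sum : ∑ i, δ₁ i = 1)
    (hδ₂ : ∀ i, 0 < δ₂ i) (hδ₂sum : ∑ i, δ₂ i = 1) :
    (∃ (δ : Fin n → ℝ) (α : ℝ), (∀ i, 0 < δ i) ∧ (∑ i, δ i = 1) ∧
        A.mulVec δ = α • A.mulVec δ₁ ∧
        D.mulVec (fun i => Real.log (δ i)) = D.mulVec (fun i => Real.log (δ₂ i))) ∧
    ((∃ k : Fin J → ℝ, (fun _ => (1 : ℝ)) = A.transpose.mulVec k) →
      ∀ (δ : Fin n → ℝ) (α : ℝ), (∀ i, 0 < δ i) → (∑ i, δ i = 1) →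
        A.mulVec δ = α • A.mulVec δ₁ →
        D.mulVec (fun i => Real.log (δ i)) = D.mulVec (fun i => Real.log (δ₂ i)) →
        α = 1) := by
  refine ⟨?_, fun ⟨k, hk⟩ δ α _ hsum hAδ _ => ?_⟩
  · by_cases hA : A = 0
    · exact ⟨δ₂, 0, hδ₂, hδ₂sum, by simp [hA], rfl⟩
    have hA_nonneg : ∀ j i, 0 ≤ A j i := fun j i => by
      obtain ⟨m, hm⟩ := hnat j i
      exact hm ▸ m.cast_nonneg
    obtain ⟨θ, hsum, α, hα⟩ := exists_sum_expTilt_eq_one_mulVec_eq_smul A hδ₁ hδ₂ hδ₂sum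
      (mulVec_ne_zero_of_nonneg hA_nonneg hA hδ₁)
    refine ⟨expTilt δ₂ (Aᵀ *ᵥ θ), α, expTilt_pos hδ₂ _, hsum, hα, ?_⟩
    have hDA : D * Aᵀ = 0 :=
      mul_transpose_eq_zero fun l => hDspan ▸ Submodule.subset_span ⟨l, rfl⟩
    rw [log_expTilt hδ₂, mulVec_add, mulVec_mulVec, hDA, zero_mulVec, add_zero]
  · have h := sum_eq_dotProduct_mulVec hk δ
    rw [hsum, hAδ, dotProduct_smul, ← sum_eq_dotProduct_mulVec hk, hδ₁sum, smul_eq_mul,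
      mul_one] at h
    exact h.symm

/-- Let `A` be a `J × n` matrix with nonnegative integer entries and full row
rank `J`, and `D` a kernel basis matrix of `A`.  For any strictly positive probability
vectors `δ₁, δ₂` there are a strictly positive probability vector `δ` and a scalar `α` with
`A δ = α (A δ₁)` and `D log δ = D log δ₂`; moreover if the all-ones vector lies in the row
space of `A` then necessarily `α = 1`. -/
theorem stmt11
    (J n : ℕ) (hJn : J < n)
    (A : Matrix (Fin J) (Fin n) ℝ)
    (hnat : ∀ j i, ∃ m : ℕ, A j i = (m : ℝ))
    (hrank : A.rank = J)
    (D : Matrix (Fin (n - J)) (Fin n) ℝ)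
    (hDindep : LinearIndependent ℝ (fun l => D l))
    (hDspan : Submodule.span ℝ (Set.range (fun l => D l)) = LinearMap.ker A.mulVecLin)
    (δ₁ δ₂ : Fin n → ℝ)
    (hδ₁ : ∀ i, 0 < δ₁ i) (hδ₁sum : ∑ i, δ₁ i = 1)
    (hδ₂ : ∀ i, 0 < δ₂ i) (hδ₂sum : ∑ i, δ₂ i = 1) :
    (∃ (δ : Fin n → ℝ) (α : ℝ), (∀ i, 0 < δ i) ∧ (∑ i, δ i = 1) ∧
        A.mulVec δ = α • A.mulVec δ₁ ∧
        D.mulVec (fun i => Real.log (δ i)) = D.mulVec (fun i => Real.log (δ₂ i))) ∧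
    ((∃ k : Fin J → ℝ, (fun _ => (1 : ℝ)) = A.transpose.mulVec k) →
      ∀ (δ : Fin n → ℝ) (α : ℝ), (∀ i, 0 < δ i) → (∑ i, δ i = 1) →
        A.mulVec δ = α • A.mulVec δ₁ →
        D.mulVec (fun i => Real.log (δ i)) = D.mulVec (fun i => Real.log (δ₂ i)) →
        α = 1) :=
  stmt11_general J n A hnat D hDspan δ₁ δ₂ hδ₁ hδ₁sum hδ₂ hδ₂sum
end
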